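/- Let Γ = (G,I,O,λ) be a labelled open graph with λ taking values in {XY,YZ}, let S ⊆ V with λ(s)=XY for all s ∈ S, and let Γ' be the YZ-insertion of a fresh vertex z with neighbourhood S into Γ. If Γ' has an extended causal flow, then |S| ≤ |O|. -/

import Mathlib

open scoped Classical
noncomputable section

inductive MLabel : Type
  | X | Y | Z | XY | XZ | YZ
  deriving DecidableEq

/-- An extended causal flow on a labelled open graph `(G, I, O, lab)`:
`c` is the correction function (its values only matter on `Oᶜ`, and must avoid inputs),
and `prec` is a strict partial order. -/
structure IsExtCausalFlow {V : Type*} (G : SimpleGraph V) (I O : Set V)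
    (lab : V → MLabel) (c : V → V) (prec : V → V → Prop) : Prop where
  irrefl : ∀ u, ¬ prec u u
  trans : ∀ ⦃a b d⦄, prec a b → prec b d → prec a d
  corr_not_input : ∀ u, u ∉ O → c u ∉ I
  c1 : ∀ u, u ∉ O → prec u (c u) ∨ u = c u
  c2 : ∀ u, u ∉ O → lab u = MLabel.XY → G.Adj u (c u)
  c3 : ∀ u, u ∉ O → lab u = MLabel.YZ → c u = u
  c4 : ∀ u, u ∉ O → ∀ v, G.Adj (c u) v → u ≠ v → prec u v

/-- The graph that results from inserting a fresh vertex (`none`) with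
neighbourhood `S` into `G`. -/
def insertGraph {V : Type*} (G : SimpleGraph V) (S : Set V) : SimpleGraph (Option V) where
  Adj a b := match a, b with
    | some x, some y => G.Adj x y
    | some x, none => x ∈ S
    | none, some y => y ∈ S
    | none, none => False
  symm := by
    constructor
    rintro (_ | x) (_ | y) h
    · exact h
    · exact h
    · exact h
    · exact h.symm
  loopless := by
    constructor
    rintro (_ | x) h
    · exact h
    · exact G.irrefl h

/-- The measurement labelling after inserting a fresh vertex measured `ℓ`. -/
def insertLab {V : Type*} (lab : V → MLabel) (ℓ : MLabel) : Option V → MLabel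
  | none => ℓ
  | some v => lab v


/-- if the YZ-insertion of a fresh vertex with neighbourhood `S`
(all of whose elements are XY-measured) preserves the existence of extended
causal flow, then `|S| ≤ |O|`. -/
theorem yz_insertion_neighbours_le_outputs {V : Type*} [Fintype V]
    (G : SimpleGraph V) (I O : Set V) (lab : V → MLabel)
    (hplanar : ∀ v, v ∉ O → lab v = MLabel.XY ∨ lab v = MLabel.YZ)
    (S : Set V) (hS : ∀ s ∈ S, lab s = MLabel.XY)
    (hflow : ∃ c' prec', IsExtCausalFlow (insertGraph G S) (some '' I) (some '' O)
      (insertLab lab MLabel.YZ) c' prec') :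
    S.ncard ≤ O.ncard := by
  classical
  obtain ⟨c, prec, F⟩ := hflow
  set O' : Set (Option V) := some '' O with hO'
  have hnone : (none : Option V) ∉ O' := by simp [hO']
  have hcz : c none = none := F.c3 none hnone rfl
  have hzS : ∀ s ∈ S, prec none (some s) := by
    intro s hs
    exact F.c4 none hnone (some s) (by rw [hcz]; exact hs) (by simp)
  have hlab2 : ∀ u : Option V, u ∉ O' →
      insertLab lab MLabel.YZ u = MLabel.XY ∨ insertLab lab MLabel.YZ u = MLabel.YZ := by
    rintro (_ | v) hu
    · exact Or.inr rfl
    · exact hplanar v (fun h => hu ⟨v, h, rfl⟩)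
  have hXYstep : ∀ u ∉ O', insertLab lab MLabel.YZ u = MLabel.XY →
      prec u (c u) ∧ c u ≠ u := by
    intro u hu h
    have adj := F.c2 u hu h
    have hne : c u ≠ u := adj.ne'
    rcases F.c1 u hu with h1 | h1
    · exact ⟨h1, hne⟩
    · exact absurd h1.symm hne
  have hAnoYZ : ∀ u ∉ O', insertLab lab MLabel.YZ u = MLabel.YZ →
      ∀ w ∉ O', c w = u → w = u := by
    intro u hu hYZ w hw hcw
    by_contra hne
    rcases hlab2 w hw with hw2 | hw2
    · have adjw := F.c2 w hw hw2
      rw [hcw] at adjw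
      have hcu : c u = u := F.c3 u hu hYZ
      have h1 : prec u w := F.c4 u hu w (by rw [hcu]; exact adjw.symm) (fun h => hne h.symm)
      rcases F.c1 w hw with h2 | h2
      · rw [hcw] at h2; exact F.irrefl u (F.trans h1 h2)
      · rw [hcw] at h2; exact hne h2
    · have h3 := F.c3 w hw hw2
      rw [h3] at hcw; exact hne hcw
  have hCinj : ∀ u ∉ O', ∀ w ∉ O', c u = c w → u = w := by
    intro u hu w hw he
    by_contra hne
    rcases hlab2 u hu with hu2 | hu2
    · rcases hlab2 w hw with hw2 | hw2
      · have adju := F.c2 u hu hu2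
        have adjw := F.c2 w hw hw2
        rw [← he] at adjw
        have h1 : prec u w := F.c4 u hu w adjw.symm hne
        have h2 : prec w u := F.c4 w hw u (he ▸ adju.symm) (Ne.symm hne)
        exact F.irrefl u (F.trans h1 h2)
      · have hcw : c w = w := F.c3 w hw hw2
        rw [hcw] at he
        exact hne (hAnoYZ w hw hw2 u hu he)
    · have hcu : c u = u := F.c3 u hu hu2
      rw [hcu] at he
      exact hne (hAnoYZ u hu hu2 w hw he.symm).symm
  have hGood : ∀ s ∈ S, ∀ k : ℕ, (∀ j ≤ k, c^[j] (some s) ∉ O') →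
      insertLab lab MLabel.YZ (c^[k] (some s)) = MLabel.XY ∧ prec none (c^[k] (some s)) := by
    intro s hs k
    induction k with
    | zero => intro _; exact ⟨hS s hs, hzS s hs⟩
    | succ k ih =>
      intro hj
      obtain ⟨hXY, hz⟩ := ih (fun j hjk => hj j (le_trans hjk (Nat.le_succ k)))
      have hkO : c^[k] (some s) ∉ O' := hj k (Nat.le_succ k)
      have hk1O : c^[k+1] (some s) ∉ O' := hj (k+1) le_rfl
      obtain ⟨hp, hne⟩ := hXYstep _ hkO hXY
      have hit : c^[k+1] (some s) = c (c^[k] (some s)) := Function.iterate_succ_apply' c k _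
      constructor
      · rcases hlab2 _ hk1O with h | h
        · exact h
        · exfalso
          have heq := hAnoYZ _ hk1O h (c^[k] (some s)) hkO hit.symm
          exact hne (by rw [← hit]; exact heq.symm)
      · rw [hit]; exact F.trans hz hp
  have hterm : ∀ s ∈ S, ∃ n, c^[n] (some s) ∈ O' := by
    intro s hs
    by_contra h
    push_neg at h
    have hmono : ∀ k, prec (c^[k] (some s)) (c^[k+1] (some s)) := by
      intro k
      obtain ⟨hXY, _⟩ := hGood s hs k (fun j _ => h j)
      obtain ⟨hp, _⟩ := hXYstep _ (h k) hXY
      rw [Function.iterate_succ_apply']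
      exact hp
    have hlt : ∀ m d : ℕ, prec (c^[m] (some s)) (c^[m+d+1] (some s)) := by
      intro m d
      induction d with
      | zero => exact hmono m
      | succ d ih => exact F.trans ih (hmono (m+d+1))
    obtain ⟨a, b, hab, he⟩ := Finite.exists_ne_map_eq_of_infinite (fun n => c^[n] (some s))
    rcases Nat.lt_or_ge a b with h' | h'
    · have hp := hlt a (b - a - 1)
      rw [show a + (b - a - 1) + 1 = b by omega, ← he] at hp
      exact F.irrefl _ hp
    · have h'' : b < a := lt_of_le_of_ne h' (Ne.symm hab)
      have hp := hlt b (a - b - 1)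
      rw [show b + (a - b - 1) + 1 = a by omega, he] at hp
      exact F.irrefl _ hp
  have key : ∀ a, ∀ ha : a ∈ S, ∀ b, ∀ hb : b ∈ S,
      Nat.find (hterm a ha) ≤ Nat.find (hterm b hb) →
      c^[Nat.find (hterm a ha)] (some a) = c^[Nat.find (hterm b hb)] (some b) → a = b := by
    intro a ha b hb hle hend
    set n := Nat.find (hterm a ha) with hn
    set m := Nat.find (hterm b hb) with hm
    have hna : ∀ j < n, c^[j] (some a) ∉ O' := fun j hj => Nat.find_min (hterm a ha) hj
    have hnb : ∀ j < m, c^[j] (some b) ∉ O' := fun j hj => Nat.find_min (hterm b hb) hj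
    have hstep : ∀ i ≤ n, c^[n - i] (some a) = c^[m - i] (some b) := by
      intro i
      induction i with
      | zero => intro _; simpa using hend
      | succ i ih =>
        intro hi
        have h1 : n - i = (n - (i+1)) + 1 := by omega
        have h2 : m - i = (m - (i+1)) + 1 := by omega
        have hp := ih (Nat.le_of_succ_le hi)
        rw [h1, h2, Function.iterate_succ_apply', Function.iterate_succ_apply'] at hp
        exact hCinj _ (hna _ (by omega)) _ (hnb _ (by omega)) hp
    have hfin := hstep n le_rfl
    simp only [Nat.sub_self, Function.iterate_zero_apply] at hfin
    by_cases hnm : m = n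
    · rw [hnm, Nat.sub_self, Function.iterate_zero_apply] at hfin
      exact Option.some_injective V hfin
    · exfalso
      have hd : m - n = (m - n - 1) + 1 := by omega
      rw [hd, Function.iterate_succ_apply'] at hfin
      set u := c^[m - n - 1] (some b) with hu
      have huO : u ∉ O' := hnb _ (by omega)
      obtain ⟨_, hzu⟩ := hGood b hb (m - n - 1) (fun j hj => hnb j (by omega))
      have hadj : (insertGraph G S).Adj (c u) none := by
        rw [← hfin]; exact ha
      have hp : prec u none := F.c4 u huO none hadj (fun h => F.irrefl none (h ▸ hzu))
      exact F.irrefl none (F.trans hzu hp)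
  let φ : V → Option V := fun v =>
    if h : ∃ n, c^[n] (some v) ∈ O' then c^[Nat.find h] (some v) else none
  have hφmem : ∀ v ∈ S, φ v ∈ O' := by
    intro v hv
    have h := hterm v hv
    simp only [φ, dif_pos h]
    exact Nat.find_spec h
  have hφinj : Set.InjOn φ S := by
    intro a ha b hb he
    have hA := hterm a ha
    have hB := hterm b hb
    simp only [φ, dif_pos hA, dif_pos hB] at he
    rcases le_total (Nat.find hA) (Nat.find hB) with h | h
    · exact key a ha b hb h he
    · exact (key b hb a ha h he.symm).symm
  have h1 : S.ncard ≤ O'.ncard := Set.ncard_le_ncard_of_injOn φ hφmem hφinj (Set.toFinite O')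
  rwa [hO', Set.ncard_image_of_injective O (Option.some_injective V)] at h1

end
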